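/- arXiv:math/0703817 — 5 statements merged into one kernel-verified Lean document; each statement's English description precedes it below -/
import Mathlib

section
/- Let f : [a,b] → ℝ be differentiable and A ⊆ [a,b] measurable. If f(A) has Lebesgue measure zero, then f'(x) = 0 for almost every x ∈ A. -/
open Set MeasureTheory Filter Topology

/-- From the rational version of the difference quotient lower bound, deduce the real version,
using continuity of `f` at points of `Icc a b`. -/
lemma aux_rat_to_real (a b : ℝ) (hab : a < b) (f : ℝ → ℝ)
    (hcont : ∀ y ∈ Set.Icc a b, ContinuousAt f y) (c h : ℝ) (x : ℝ)
    (hx : ∀ q : ℚ, (q : ℝ) ∈ Set.Icc a b → |(q : ℝ) - x| < h →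
      c * |(q : ℝ) - x| ≤ |f q - f x|) :
    ∀ y ∈ Set.Icc a b, |y - x| < h → c * |y - x| ≤ |f y - f x| := by
  intro y hy hyh
  by_contra hlt
  push_neg at hlt
  have hcy := hcont y hy
  have h1 : ∀ᶠ z in 𝓝 y, |z - x| < h := by
    have : ContinuousAt (fun z : ℝ => |z - x|) y := by fun_prop
    exact this.eventually_lt continuousAt_const hyh
  have h2 : ∀ᶠ z in 𝓝 y, |f z - f x| < c * |z - x| := by
    have hca : ContinuousAt (fun z : ℝ => |f z - f x|) y := by
      exact (hcy.sub continuousAt_const).abs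
    have hcb : ContinuousAt (fun z : ℝ => c * |z - x|) y := by fun_prop
    exact hca.eventually_lt hcb hlt
  obtain ⟨r, hr, hball⟩ := Metric.eventually_nhds_iff_ball.mp (h1.and h2)
  have hmax : max a (y - r) < min b (y + r) := by
    rcases hy with ⟨hy1, hy2⟩
    rw [max_lt_iff]
    constructor <;> rw [lt_min_iff] <;> constructor <;> linarith
  obtain ⟨q, hq1, hq2⟩ := exists_rat_btwn hmax
  rw [max_lt_iff] at hq1
  rw [lt_min_iff] at hq2
  have hqball : (q : ℝ) ∈ Metric.ball y r := by
    rw [Metric.mem_ball, Real.dist_eq, abs_sub_lt_iff]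
    constructor <;> linarith [hq1.2, hq2.2]
  have hqI : (q : ℝ) ∈ Set.Icc a b := ⟨hq1.1.le, hq2.1.le⟩
  have := hball _ hqball
  exact absurd (hx q hqI this.1) (not_le.2 this.2)

/-- A lower bound on difference quotients near `x` gives a lower bound on `|f' x|`. -/
lemma aux_slope (a b : ℝ) (hab : a < b) (f : ℝ → ℝ) (d x c h : ℝ)
    (hx : x ∈ Set.Icc a b) (hd : HasDerivAt f d x) (hh : 0 < h)
    (H : ∀ y ∈ Set.Icc a b, |y - x| < h → c * |y - x| ≤ |f y - f x|) : c ≤ |d| := by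
  have hcl : x ∈ closure (Set.Icc a b \ {x}) := by
    rcases lt_or_eq_of_le hx.2 with hxb | hxb
    · have hsub : Set.Ioc x b ⊆ Set.Icc a b \ {x} := by
        rintro y ⟨hy1, hy2⟩
        exact ⟨⟨le_trans hx.1 hy1.le, hy2⟩, (ne_of_gt hy1)⟩
      have : x ∈ closure (Set.Ioc x b) := by
        rw [closure_Ioc hxb.ne]
        exact ⟨le_refl x, hxb.le⟩
      exact closure_mono hsub this
    · have hax : a < x := hxb ▸ hab
      have hsub : Set.Ico a x ⊆ Set.Icc a b \ {x} := by
        rintro y ⟨hy1, hy2⟩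
        exact ⟨⟨hy1, le_trans hy2.le hx.2⟩, ne_of_lt hy2⟩
      have : x ∈ closure (Set.Ico a x) := by
        rw [closure_Ico hax.ne]
        exact ⟨hax.le, le_refl x⟩
      exact closure_mono hsub this
  haveI hne : (𝓝[Set.Icc a b \ {x}] x).NeBot := mem_closure_iff_nhdsWithin_neBot.mp hcl
  have hs : Tendsto (slope f x) (𝓝[Set.Icc a b \ {x}] x) (𝓝 d) :=
    hasDerivWithinAt_iff_tendsto_slope.mp hd.hasDerivWithinAt
  have habs : Tendsto (fun y => |slope f x y|) (𝓝[Set.Icc a b \ {x}] x) (𝓝 |d|) := hs.abs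
  refine ge_of_tendsto habs ?_
  have hmem : ∀ᶠ y in 𝓝[Set.Icc a b \ {x}] x, y ∈ Set.Icc a b \ {x} := self_mem_nhdsWithin
  have hclose : ∀ᶠ y in 𝓝[Set.Icc a b \ {x}] x, |y - x| < h := by
    have : ∀ᶠ y in 𝓝 x, |y - x| < h := by
      have : ContinuousAt (fun y : ℝ => |y - x|) x := by fun_prop
      simpa using this.eventually_lt continuousAt_const (by simpa using hh)
    exact this.filter_mono nhdsWithin_le_nhds
  filter_upwards [hmem, hclose] with y hy hyh
  have hyx : y ≠ x := hy.2
  have hK := H y hy.1 hyh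
  rw [slope_def_field]
  have h0 : 0 < |y - x| := abs_pos.2 (sub_ne_zero.2 hyx)
  rw [abs_div, le_div_iff₀ h0]
  linarith [hK]

theorem stmt_8 (a b : ℝ) (hab : a ≤ b) (f f' : ℝ → ℝ)
    (hf : ∀ x ∈ Set.Icc a b, HasDerivAt f (f' x) x)
    (A : Set ℝ) (hA : A ⊆ Set.Icc a b) (hAm : MeasurableSet A)
    (hfA : MeasureTheory.volume (f '' A) = 0) :
    ∀ᵐ x ∂MeasureTheory.volume, x ∈ A → f' x = 0 := by
  rcases eq_or_lt_of_le hab with rfl | hab'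
  · rw [MeasureTheory.ae_iff]
    refine measure_mono_null (fun x hx => ?_) (Real.volume_singleton (a := a))
    rw [Set.mem_setOf_eq, Classical.not_imp] at hx
    have h := hA hx.1
    rwa [Set.Icc_self] at h
  -- main case a < b
  have hcont : ∀ y ∈ Set.Icc a b, ContinuousAt f y := fun y hy => (hf y hy).continuousAt
  -- the clamped version of f, continuous on all of ℝ
  set F : ℝ → ℝ := fun x => f (max a (min x b)) with hFdef
  have hclamp : ∀ x, max a (min x b) ∈ Set.Icc a b :=
    fun x => ⟨le_max_left _ _, max_le hab (min_le_right _ _)⟩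
  have hFcont : Continuous F := by
    have hproj : Continuous fun x : ℝ => max a (min x b) := by fun_prop
    have hfc : ContinuousOn f (Set.Icc a b) := fun y hy => (hcont y hy).continuousWithinAt
    exact hfc.comp_continuous hproj hclamp
  have hFeq : ∀ x ∈ Set.Icc a b, F x = f x := by
    intro x hx
    simp only [hFdef]
    rw [min_eq_left hx.2, max_eq_right hx.1]
  -- the sets E n
  set E : ℕ → Set ℝ := fun n =>
    ⋂ q : ℚ, (A ∩ {x | (q : ℝ) ∈ Set.Icc a b → |(q : ℝ) - x| < 1 / (n + 1) →
      (1 / (n + 1)) * |(q : ℝ) - x| ≤ |f q - f x|}) with hEdef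
  have hEsubA : ∀ n, E n ⊆ A := by
    intro n x hx
    exact (Set.mem_iInter.1 hx 0).1
  have hEm : ∀ n, MeasurableSet (E n) := by
    intro n
    refine MeasurableSet.iInter fun q => ?_
    by_cases hq : (q : ℝ) ∈ Set.Icc a b
    · have hkey : A ∩ {x | (q : ℝ) ∈ Set.Icc a b → |(q : ℝ) - x| < 1 / (n + 1) →
          (1 / (n + 1)) * |(q : ℝ) - x| ≤ |f q - f x|}
          = A ∩ ({x : ℝ | |(q : ℝ) - x| < 1 / (n + 1)}ᶜ ∪
            {x : ℝ | (1 / (n + 1)) * |(q : ℝ) - x| ≤ |F q - F x|}) := by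
        ext x
        simp only [Set.mem_inter_iff, Set.mem_setOf_eq, Set.mem_union, Set.mem_compl_iff]
        constructor
        · rintro ⟨hxA, hximp⟩
          refine ⟨hxA, ?_⟩
          by_cases hxd : |(q : ℝ) - x| < 1 / (n + 1)
          · right
            rw [hFeq _ hq, hFeq _ (hA hxA)]
            exact hximp hq hxd
          · left; exact hxd
        · rintro ⟨hxA, hxor⟩
          refine ⟨hxA, fun _ hxd => ?_⟩
          rcases hxor with hxor | hxor
          · exact absurd hxd hxor
          · rwa [hFeq _ hq, hFeq _ (hA hxA)] at hxor
      rw [hkey]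
      refine hAm.inter (MeasurableSet.union ?_ ?_)
      · exact (isOpen_lt (by fun_prop) continuous_const).measurableSet.compl
      · exact (isClosed_le (by fun_prop) (by fun_prop)).measurableSet
    · have : A ∩ {x | (q : ℝ) ∈ Set.Icc a b → |(q : ℝ) - x| < 1 / (n + 1) →
          (1 / (n + 1)) * |(q : ℝ) - x| ≤ |f q - f x|} = A := by
        ext x
        simp only [Set.mem_inter_iff, Set.mem_setOf_eq, and_iff_left_iff_imp]
        exact fun _ hq' => absurd hq' hq
      rw [this]; exact hAm
  -- coverage
  have hcover : {x | x ∈ A ∧ f' x ≠ 0} ⊆ ⋃ n, E n := by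
    rintro x ⟨hxA, hfx⟩
    have hx0 : 0 < |f' x| := abs_pos.2 hfx
    have hd := hf x (hA hxA)
    have hlo := (hasDerivAt_iff_isLittleO.mp hd).def (half_pos hx0)
    rw [Metric.eventually_nhds_iff] at hlo
    obtain ⟨δ, hδ, hlo⟩ := hlo
    obtain ⟨n, hn⟩ := exists_nat_one_div_lt (lt_min hδ (half_pos hx0) : (0:ℝ) < min δ (|f' x| / 2))
    rw [lt_min_iff] at hn
    refine Set.mem_iUnion.2 ⟨n, Set.mem_iInter.2 fun q => ⟨hxA, fun hq hqx => ?_⟩⟩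
    have hqδ : dist (q : ℝ) x < δ := by
      rw [Real.dist_eq]; exact lt_trans hqx hn.1
    have h1 := hlo hqδ
    simp only [Real.norm_eq_abs, smul_eq_mul] at h1
    have h2 : |((q : ℝ) - x) * f' x| - |f q - f x| ≤ |f q - f x - ((q : ℝ) - x) * f' x| := by
      have := abs_sub_abs_le_abs_sub (((q : ℝ) - x) * f' x) (f q - f x)
      rw [abs_sub_comm (((q : ℝ) - x) * f' x) (f q - f x)] at this
      linarith
    rw [abs_mul] at h2
    have hq3 : 1 / ((n : ℝ) + 1) ≤ |f' x| / 2 := hn.2.le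
    have hq4 : (0:ℝ) ≤ |(q : ℝ) - x| := abs_nonneg _
    nlinarith [h1, h2]
  -- each E n is null
  have hEnull : ∀ n, MeasureTheory.volume (E n) = 0 := by
    intro n
    set c : ℝ := 1 / ((n : ℝ) + 1) with hcdef
    have hc : 0 < c := by positivity
    -- real version of the bound on E n
    have hreal : ∀ x ∈ E n, ∀ y ∈ Set.Icc a b, |y - x| < c → c * |y - x| ≤ |f y - f x| := by
      intro x hx
      refine aux_rat_to_real a b hab' f hcont c c x fun q hq1 hq2 => ?_
      exact (Set.mem_iInter.1 hx q).2 hq1 hq2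
    have hpiece : ∀ k : ℤ,
        MeasureTheory.volume (E n ∩ Set.Ico ((k : ℝ) * (c / 2)) ((k + 1 : ℝ) * (c / 2))) = 0 := by
      intro k
      set S := E n ∩ Set.Ico ((k : ℝ) * (c / 2)) ((k + 1 : ℝ) * (c / 2)) with hSdef
      have hSm : MeasurableSet S := (hEm n).inter measurableSet_Ico
      have hSA : S ⊆ A := fun x hx => hEsubA n hx.1
      have hSdiam : ∀ x ∈ S, ∀ y ∈ S, |y - x| < c := by
        rintro x ⟨_, hx1, hx2⟩ y ⟨_, hy1, hy2⟩
        rw [abs_sub_lt_iff]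
        constructor <;> nlinarith [hc]
      have hInj : Set.InjOn f S := by
        intro x hx y hy hfe
        by_contra hne
        have hb := hreal x hx.1 y (hA (hSA hy)) (hSdiam x hx y hy)
        rw [hfe] at hb
        simp only [sub_self, abs_zero] at hb
        have : 0 < |y - x| := abs_pos.2 (sub_ne_zero.2 (Ne.symm hne))
        nlinarith
      have hder : ∀ x ∈ S, HasFDerivWithinAt f
          ((1 : ℝ →L[ℝ] ℝ).smulRight (f' x)) S x := fun x hx =>
        ((hf x (hA (hSA hx))).hasDerivWithinAt).hasFDerivWithinAt
      have key := MeasureTheory.lintegral_abs_det_fderiv_le_addHaar_image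
        MeasureTheory.volume hSm hder hInj
      simp only [ContinuousLinearMap.det_smulRight, ContinuousLinearMap.one_apply, one_mul] at key
      have himg : MeasureTheory.volume (f '' S) = 0 :=
        measure_mono_null (Set.image_mono hSA) hfA
      have hlow : ENNReal.ofReal c * MeasureTheory.volume S
          ≤ ∫⁻ x in S, ENNReal.ofReal |f' x| ∂MeasureTheory.volume := by
        rw [← MeasureTheory.setLIntegral_const S (ENNReal.ofReal c)]
        refine MeasureTheory.lintegral_mono_ae ?_
        refine (MeasureTheory.ae_restrict_mem hSm).mono fun x hx => ?_
        refine ENNReal.ofReal_le_ofReal ?_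
        exact aux_slope a b hab' f (f' x) x c c (hA (hSA hx)) (hf x (hA (hSA hx))) hc
          (hreal x hx.1)
      have hfinal : ENNReal.ofReal c * MeasureTheory.volume S = 0 := by
        have := le_trans hlow (le_trans key (le_of_eq himg))
        exact le_antisymm this (zero_le (a := _))
      rcases mul_eq_zero.1 hfinal with h0 | h0
      · exact absurd h0 (by simp [ENNReal.ofReal_eq_zero, not_le, hc])
      · exact h0
    have hcover2 : E n ⊆ ⋃ k : ℤ,
        (E n ∩ Set.Ico ((k : ℝ) * (c / 2)) ((k + 1 : ℝ) * (c / 2))) := by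
      intro x hx
      have hc2 : (0:ℝ) < c / 2 := half_pos hc
      refine Set.mem_iUnion.2 ⟨⌊x / (c / 2)⌋, hx, ?_, ?_⟩
      · rw [← le_div_iff₀ hc2]
        exact Int.floor_le _
      · rw [← div_lt_iff₀ hc2]
        push_cast
        exact Int.lt_floor_add_one _
    exact measure_mono_null hcover2 (MeasureTheory.measure_iUnion_null hpiece)
  -- conclude
  rw [MeasureTheory.ae_iff]
  refine measure_mono_null (fun x hx => ?_)
    (MeasureTheory.measure_iUnion_null hEnull)
  rw [Set.mem_setOf_eq, Classical.not_imp] at hx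
  exact hcover ⟨hx.1, hx.2⟩
end

section
/- Let f : ℝ → ℝ be Lipschitz and A ⊆ ℝ measurable with f(A) of Lebesgue measure zero. Then f'(x) = 0 for almost every x ∈ A. -/
open MeasureTheory Set
open scoped ENNReal NNReal

lemma null_of_antilipschitzOn (f : ℝ → ℝ) (B : Set ℝ) (c : ℝ) (hc : 0 < c)
    (h : ∀ x ∈ B, ∀ y ∈ B, c * |x - y| ≤ |f x - f y|)
    (h0 : volume (f '' B) = 0) : volume B = 0 := by
  classical
  set g : ℝ → ℝ := fun y => if hy : ∃ x ∈ B, f x = y then hy.choose else 0 with hg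
  have hgmem : ∀ y ∈ f '' B, g y ∈ B ∧ f (g y) = y := by
    intro y hy
    obtain ⟨x, hxB, hxy⟩ := hy
    have hy' : ∃ x ∈ B, f x = y := ⟨x, hxB, hxy⟩
    simp only [hg, dif_pos hy']
    exact ⟨hy'.choose_spec.1, hy'.choose_spec.2⟩
  have hlip : LipschitzOnWith c⁻¹.toNNReal g (f '' B) := by
    intro y₁ hy₁ y₂ hy₂
    obtain ⟨hb1, hf1⟩ := hgmem y₁ hy₁
    obtain ⟨hb2, hf2⟩ := hgmem y₂ hy₂
    have key := h _ hb1 _ hb2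
    rw [hf1, hf2] at key
    have hd : dist (g y₁) (g y₂) ≤ c⁻¹ * dist y₁ y₂ := by
      rw [Real.dist_eq, Real.dist_eq]
      rw [← le_div_iff₀' hc] at key
      simpa [div_eq_inv_mul] using key
    calc edist (g y₁) (g y₂) = ENNReal.ofReal (dist (g y₁) (g y₂)) := by
          rw [edist_dist]
      _ ≤ ENNReal.ofReal (c⁻¹ * dist y₁ y₂) := ENNReal.ofReal_le_ofReal hd
      _ = (c⁻¹.toNNReal : ℝ≥0∞) * edist y₁ y₂ := by
          rw [ENNReal.ofReal_mul (by positivity), edist_dist]; rfl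
  have hsub : B ⊆ g '' (f '' B) := by
    intro x hx
    refine ⟨f x, mem_image_of_mem f hx, ?_⟩
    obtain ⟨hb, hfx⟩ := hgmem (f x) (mem_image_of_mem f hx)
    have key := h _ hb _ hx
    rw [hfx] at key
    have key' : c * |g (f x) - x| ≤ 0 := by simpa using key
    have h1 : |g (f x) - x| ≤ 0 := by nlinarith [abs_nonneg (g (f x) - x)]
    exact sub_eq_zero.mp (abs_nonpos_iff.mp h1)

  have : volume B ≤ c⁻¹.toNNReal * volume (f '' B) := by
    calc volume B ≤ volume (g '' (f '' B)) := measure_mono hsub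
      _ = μH[1] (g '' (f '' B)) := by rw [MeasureTheory.hausdorffMeasure_real]
      _ ≤ (c⁻¹.toNNReal : ℝ≥0∞) ^ (1 : ℝ) * μH[1] (f '' B) :=
          hlip.hausdorffMeasure_image_le zero_le_one
      _ = c⁻¹.toNNReal * volume (f '' B) := by
          rw [MeasureTheory.hausdorffMeasure_real, ENNReal.rpow_one]
  rw [h0, mul_zero] at this
  exact le_antisymm this zero_le

theorem stmt_9 (f : ℝ → ℝ) (K : NNReal) (hf : LipschitzWith K f)
    (A : Set ℝ) (hA : MeasurableSet A)
    (hfA : MeasureTheory.volume (f '' A) = 0) :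
    ∀ᵐ x ∂MeasureTheory.volume, x ∈ A → deriv f x = 0 := by
  classical
  set B : ℕ → ℕ → Set ℝ := fun n m =>
    {x | x ∈ A ∧ ∀ y : ℝ, |y - x| ≤ ((m : ℝ) + 1)⁻¹ →
      ((n : ℝ) + 1)⁻¹ * |y - x| ≤ |f y - f x|} with hB
  set P : ℕ → ℕ → ℤ → Set ℝ := fun n m k =>
    B n m ∩ Set.Icc ((k : ℝ) * ((m : ℝ) + 1)⁻¹) (((k : ℝ) + 1) * ((m : ℝ) + 1)⁻¹) with hPdef
  have hPnull : ∀ n m k, volume (P n m k) = 0 := by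
    intro n m k
    apply null_of_antilipschitzOn f _ ((n : ℝ) + 1)⁻¹ (by positivity)
    · intro x hx y hy
      have hxy : |y - x| ≤ ((m : ℝ) + 1)⁻¹ := by
        have h1 := hx.2.1
        have h2 := hx.2.2
        have h3 := hy.2.1
        have h4 := hy.2.2
        have hr : ((k : ℝ) + 1) * ((m : ℝ) + 1)⁻¹ - (k : ℝ) * ((m : ℝ) + 1)⁻¹
            = ((m : ℝ) + 1)⁻¹ := by ring
        rw [abs_sub_le_iff]
        constructor <;> linarith
      have := hx.1.2 y hxy
      rwa [abs_sub_comm x y, abs_sub_comm (f x) (f y)]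
    · apply measure_mono_null _ hfA
      apply Set.image_mono
      exact fun x hx => hx.1.1
  have hU : volume (⋃ (n : ℕ) (m : ℕ) (k : ℤ), P n m k) = 0 := by
    refine measure_iUnion_null fun n => measure_iUnion_null fun m =>
      measure_iUnion_null fun k => hPnull n m k
  filter_upwards [hf.ae_differentiableAt, measure_eq_zero_iff_ae_notMem.mp hU]
    with x hdiff hnot hxA
  by_contra h0
  apply hnot
  have hd : HasDerivAt f (deriv f x) x := hdiff.hasDerivAt
  set c := |deriv f x| with hc
  have hcpos : 0 < c := abs_pos.mpr h0
  -- choose n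
  obtain ⟨n, hn⟩ := exists_nat_ge (2 / c)
  have hninv : ((n : ℝ) + 1)⁻¹ ≤ c / 2 := by
    rw [inv_le_comm₀ (by positivity) (by positivity)]
    calc (c / 2)⁻¹ = 2 / c := by rw [inv_div]
      _ ≤ (n : ℝ) := hn
      _ ≤ (n : ℝ) + 1 := by linarith
  -- littleO bound
  have hlo := (hasDerivAt_iff_isLittleO.mp hd).def (by positivity : (0 : ℝ) < c / 2)
  rw [Metric.eventually_nhds_iff] at hlo
  obtain ⟨δ, hδpos, hδ⟩ := hlo
  obtain ⟨m, hm⟩ := exists_nat_one_div_lt hδpos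
  have hmδ : ((m : ℝ) + 1)⁻¹ < δ := by rwa [one_div] at hm
  have hxB : x ∈ B n m := by
    refine ⟨hxA, fun y hy => ?_⟩
    have hyd : dist y x < δ := by
      rw [Real.dist_eq]
      exact lt_of_le_of_lt hy hmδ
    have := hδ hyd
    simp only [Real.norm_eq_abs, smul_eq_mul] at this
    have habs : |(y - x) * deriv f x| - |f y - f x| ≤ c / 2 * |y - x| := by
      calc |(y - x) * deriv f x| - |f y - f x|
          ≤ |f y - f x - (y - x) * deriv f x| := by
            have t1 := abs_sub_abs_le_abs_sub ((y - x) * deriv f x) (f y - f x)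
            have t2 : |(y - x) * deriv f x - (f y - f x)|
                = |f y - f x - (y - x) * deriv f x| := abs_sub_comm _ _
            linarith
      _ ≤ c / 2 * |y - x| := this
    have hmul : |(y - x) * deriv f x| = |y - x| * c := by
      rw [abs_mul, hc]
    have : c / 2 * |y - x| ≤ |f y - f x| := by nlinarith [abs_nonneg (y - x)]
    calc ((n : ℝ) + 1)⁻¹ * |y - x| ≤ c / 2 * |y - x| :=
          mul_le_mul_of_nonneg_right hninv (abs_nonneg _)
      _ ≤ |f y - f x| := this
  refine Set.mem_iUnion.mpr ⟨n, Set.mem_iUnion.mpr ⟨m, Set.mem_iUnion.mpr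
    ⟨⌊x * ((m : ℝ) + 1)⌋, hxB, ?_, ?_⟩⟩⟩
  · have h1 : ((⌊x * ((m : ℝ) + 1)⌋ : ℝ)) ≤ x * ((m : ℝ) + 1) := Int.floor_le _
    have hmp : (0 : ℝ) < (m : ℝ) + 1 := by positivity
    calc ((⌊x * ((m : ℝ) + 1)⌋ : ℝ)) * ((m : ℝ) + 1)⁻¹
        ≤ (x * ((m : ℝ) + 1)) * ((m : ℝ) + 1)⁻¹ :=
          mul_le_mul_of_nonneg_right h1 (by positivity)
      _ = x := by field_simp
  · have h2 : x * ((m : ℝ) + 1) ≤ (⌊x * ((m : ℝ) + 1)⌋ : ℝ) + 1 :=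
      (Int.lt_floor_add_one _).le
    have hmp : (0 : ℝ) < (m : ℝ) + 1 := by positivity
    calc x = (x * ((m : ℝ) + 1)) * ((m : ℝ) + 1)⁻¹ := by field_simp
      _ ≤ ((⌊x * ((m : ℝ) + 1)⌋ : ℝ) + 1) * ((m : ℝ) + 1)⁻¹ :=
          mul_le_mul_of_nonneg_right h2 (by positivity)
end

section
/- Let g : ℝ → ℝ be Lipschitz, h ∈ C¹ with the critical set {t : h'(t) = 0} of Lebesgue measure zero, and let u be a C² solution of u'' + c u' + g(u) = h(t) on [0, t̄]. Then for every Lebesgue-null set B ⊆ ℝ, the preimage u⁻¹(B) ∩ [0, t̄] is Lebesgue-null. -/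
open MeasureTheory Set Filter Metric Topology

set_option maxHeartbeats 1000000

/-- On the set where the derivative is positive, the preimage of a null set is null. -/
lemma aux_pos_10 (u : ℝ → ℝ) (hu : ContDiff ℝ 1 u) (B : Set ℝ) (hBm : MeasurableSet B)
    (hB : MeasureTheory.volume B = 0) :
    MeasureTheory.volume (u ⁻¹' B ∩ {t | 0 < deriv u t}) = 0 := by
  have hcont : Continuous u := hu.continuous
  have hdc : Continuous (deriv u) := hu.continuous_deriv le_rfl
  have hopen : IsOpen {t : ℝ | 0 < deriv u t} := isOpen_lt continuous_const hdc
  have hcover : u ⁻¹' B ∩ {t | 0 < deriv u t} ⊆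
      ⋃ p ∈ {p : ℚ × ℚ | Set.Ioo (p.1 : ℝ) p.2 ⊆ {t | 0 < deriv u t}},
        u ⁻¹' B ∩ Set.Ioo (p.1 : ℝ) p.2 := by
    rintro t ⟨htB, htP⟩
    obtain ⟨ε, hε, hball⟩ := Metric.isOpen_iff.mp hopen t htP
    obtain ⟨q, hq1, hq2⟩ := exists_rat_btwn (show t - ε < t by linarith)
    obtain ⟨r, hr1, hr2⟩ := exists_rat_btwn (show t < t + ε by linarith)
    have hmem : (q, r) ∈ {p : ℚ × ℚ | Set.Ioo (p.1 : ℝ) p.2 ⊆ {t | 0 < deriv u t}} := by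
      intro x hx
      apply hball
      rw [Real.ball_eq_Ioo]
      exact ⟨by linarith [hx.1], by linarith [hx.2]⟩
    exact Set.mem_biUnion hmem ⟨htB, hq2, hr1⟩
  refine measure_mono_null hcover ((measure_biUnion_null_iff (Set.to_countable _)).mpr ?_)
  rintro ⟨q, r⟩ hqr
  set s : Set ℝ := u ⁻¹' B ∩ Set.Ioo (q : ℝ) r with hs_def
  have hsm : MeasurableSet s := (hBm.preimage hcont.measurable).inter measurableSet_Ioo
  have hmono : StrictMonoOn u (Set.Ioo (q : ℝ) r) :=
    strictMonoOn_of_deriv_pos (convex_Ioo _ _) hcont.continuousOn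
      (fun x hx => hqr (by rwa [interior_Ioo] at hx))
  have hinj : Set.InjOn u s := hmono.injOn.mono Set.inter_subset_right
  have hf' : ∀ x ∈ s, HasDerivWithinAt u (deriv u x) s x := fun x _ =>
    ((hu.differentiable one_ne_zero) x).hasDerivAt.hasDerivWithinAt
  have key : (∫⁻ x in s, ENNReal.ofReal |deriv u x|) ≤ volume (u '' s) := by
    simpa only [ContinuousLinearMap.det_toSpanSingleton] using
      MeasureTheory.lintegral_abs_det_fderiv_le_addHaar_image volume hsm
        (fun x hx => (hf' x hx).hasFDerivWithinAt) hinj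
  have himg : volume (u '' s) = 0 :=
    measure_mono_null (by rintro _ ⟨x, hx, rfl⟩; exact hx.1) hB
  have hzero : (∫⁻ x in s, ENNReal.ofReal |deriv u x|) = 0 :=
    le_antisymm (himg ▸ key) zero_le
  have hmeas : Measurable fun x => ENNReal.ofReal |deriv u x| :=
    ENNReal.measurable_ofReal.comp hdc.abs.measurable
  have hae := (lintegral_eq_zero_iff hmeas).mp hzero
  have hae' : (volume.restrict s) {x | ¬ ENNReal.ofReal |deriv u x| = 0} = 0 := by
    have := ae_iff.mp hae
    simpa using this
  have hsub : s ⊆ {x | ¬ ENNReal.ofReal |deriv u x| = 0} := by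
    intro x hx
    have hpos : 0 < deriv u x := hqr hx.2
    simp only [Set.mem_setOf_eq, ENNReal.ofReal_eq_zero, not_le]
    exact abs_pos.mpr hpos.ne'
  have hle : volume s ≤ 0 :=
    calc volume s = volume.restrict s s := (Measure.restrict_apply_self volume s).symm
      _ ≤ volume.restrict s {x | ¬ ENNReal.ofReal |deriv u x| = 0} := measure_mono hsub
      _ = 0 := hae'
  exact le_antisymm hle zero_le

/-- The set of critical points of u in [0, tbar] is null, given the ODE. -/
lemma aux_crit_10 (c tbar : ℝ) (g h u : ℝ → ℝ) (L : NNReal)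
    (hg : LipschitzWith L g) (hh : ContDiff ℝ 1 h)
    (hcrit : MeasureTheory.volume {t | deriv h t = 0} = 0)
    (hu : ContDiff ℝ 2 u)
    (heq : ∀ t ∈ Set.Icc 0 tbar,
      deriv (deriv u) t + c * deriv u t + g (u t) = h t) :
    MeasureTheory.volume (Set.Icc 0 tbar ∩ {t | deriv u t = 0}) = 0 := by
  set A := Set.Icc (0:ℝ) tbar ∩ {t | deriv u t = 0} with hA_def
  have hu1 : ContDiff ℝ 1 u := hu.of_le (by norm_num)
  have hud : Differentiable ℝ u := hu1.differentiable one_ne_zero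
  have hu' : ContDiff ℝ 1 (deriv u) :=
    ((contDiff_succ_iff_deriv (n := 1)).mp (by exact_mod_cast hu)).2.2
  have hu'd : Differentiable ℝ (deriv u) := hu'.differentiable one_ne_zero
  have hdc : Continuous (deriv u) := hu'.continuous
  have hAm : MeasurableSet A := by
    apply measurableSet_Icc.inter
    exact hdc.measurable (measurableSet_singleton 0)
  have hdens := Besicovitch.ae_tendsto_measure_inter_div_of_measurableSet volume hAm
  set D := {t : ℝ | t ∈ A ∧ Tendsto
      (fun r => volume (A ∩ closedBall t r) / volume (closedBall t r)) (𝓝[>] 0) (𝓝 1)}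
    with hD_def
  have hADnull : volume (A \ D) = 0 := by
    apply measure_mono_null _ (ae_iff.mp hdens)
    intro x hx
    simp only [Set.mem_setOf_eq]
    intro hT
    exact hx.2 ⟨hx.1, by simpa [Set.indicator_of_mem hx.1] using hT⟩
  -- every point of D is an accumulation point of D
  have hacc : ∀ s ∈ D, (𝓝[D \ {s}] s).NeBot := by
    intro s hs
    rw [← mem_closure_iff_nhdsWithin_neBot, Metric.mem_closure_iff]
    intro ε hε
    have h1 : ∀ᶠ r in 𝓝[>] (0:ℝ),
        (1:ENNReal)/2 < volume (A ∩ closedBall s r) / volume (closedBall s r) :=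
      hs.2.eventually (lt_mem_nhds (by norm_num))
    have h2 : ∀ᶠ r in 𝓝[>] (0:ℝ), r < ε := by
      filter_upwards [Ioo_mem_nhdsGT_of_mem ⟨le_refl (0:ℝ), hε⟩] with r hr
      exact hr.2
    obtain ⟨r, hratio, hrε⟩ := (h1.and h2).exists
    have hA_pos : volume (A ∩ closedBall s r) ≠ 0 := by
      intro h0
      rw [h0, ENNReal.zero_div] at hratio
      simp at hratio
    have hD_pos : volume ((D \ {s}) ∩ closedBall s r) ≠ 0 := by
      intro h0
      apply hA_pos
      have hsubset : A ∩ closedBall s r ⊆ (A \ D) ∪ ((D \ {s}) ∩ closedBall s r) ∪ {s} := by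
        rintro x ⟨hxA, hxb⟩
        by_cases hxD : x ∈ D
        · by_cases hxs : x = s
          · exact Or.inr (by simp [hxs])
          · exact Or.inl (Or.inr ⟨⟨hxD, hxs⟩, hxb⟩)
        · exact Or.inl (Or.inl ⟨hxA, hxD⟩)
      refine le_antisymm ?_ zero_le
      calc volume (A ∩ closedBall s r)
          ≤ volume ((A \ D) ∪ ((D \ {s}) ∩ closedBall s r) ∪ {s}) := measure_mono hsubset
        _ ≤ volume ((A \ D) ∪ ((D \ {s}) ∩ closedBall s r)) + volume {s} := measure_union_le _ _
        _ ≤ volume (A \ D) + volume ((D \ {s}) ∩ closedBall s r) + volume {s} := by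
            gcongr; exact measure_union_le _ _
        _ = 0 := by rw [hADnull, h0, Real.volume_singleton]; simp
    obtain ⟨x, hx⟩ := nonempty_of_measure_ne_zero hD_pos
    refine ⟨x, hx.1, ?_⟩
    have := mem_closedBall.mp hx.2
    rw [dist_comm]
    calc dist x s ≤ r := this
      _ < ε := hrε
  -- second derivative vanishes on D
  have hsnd : ∀ s ∈ D, deriv (deriv u) s = 0 := by
    intro s hs
    have hne := hacc s hs
    have hT : Tendsto (slope (deriv u) s) (𝓝[D \ {s}] s) (𝓝 (deriv (deriv u) s)) :=
      (hasDerivAt_iff_tendsto_slope.mp (hu'd s).hasDerivAt).mono_left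
        (nhdsWithin_mono s (fun x hx => hx.2))
    have hT0 : Tendsto (slope (deriv u) s) (𝓝[D \ {s}] s) (𝓝 0) := by
      have hev : ∀ᶠ x in 𝓝[D \ {s}] s, (0:ℝ) = slope (deriv u) s x := by
        filter_upwards [self_mem_nhdsWithin] with x hx
        have hx0 : deriv u x = 0 := hx.1.1.2
        have hs0 : deriv u s = 0 := hs.1.2
        simp [slope_def_field, hx0, hs0]
      exact Tendsto.congr' hev tendsto_const_nhds
    exact tendsto_nhds_unique hT hT0
  -- g ∘ u = h on D
  have hgh : ∀ s ∈ D, g (u s) = h s := by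
    intro s hs
    have := heq s hs.1.1
    rw [hsnd s hs, hs.1.2] at this
    linarith
  -- deriv h = 0 on D
  have hDh : ∀ t ∈ D, deriv h t = 0 := by
    intro t ht
    have hne := hacc t ht
    have hl : 𝓝[D \ {t}] t ≤ 𝓝[≠] t := nhdsWithin_mono t (fun x hx => hx.2)
    have hTh : Tendsto (slope h t) (𝓝[D \ {t}] t) (𝓝 (deriv h t)) :=
      (hasDerivAt_iff_tendsto_slope.mp ((hh.differentiable one_ne_zero) t).hasDerivAt).mono_left hl
    have hTu : Tendsto (slope u t) (𝓝[D \ {t}] t) (𝓝 0) := by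
      have h0 := hasDerivAt_iff_tendsto_slope.mp (hud t).hasDerivAt
      rw [ht.1.2] at h0
      exact h0.mono_left hl
    have hbound : ∀ᶠ x in 𝓝[D \ {t}] t, |slope h t x| ≤ (L : ℝ) * |slope u t x| := by
      filter_upwards [self_mem_nhdsWithin] with x hx
      have hxD := hx.1
      have hxt : x ≠ t := hx.2
      have h1 : h x - h t = g (u x) - g (u t) := by rw [hgh x hxD, hgh t ht]
      have h2 : |g (u x) - g (u t)| ≤ (L : ℝ) * |u x - u t| := by
        have := hg.dist_le_mul (u x) (u t)
        rwa [Real.dist_eq, Real.dist_eq] at this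
      have hpos : 0 < |x - t| := abs_pos.mpr (sub_ne_zero.mpr hxt)
      rw [slope_def_field, slope_def_field, h1, abs_div, abs_div, ← mul_div_assoc]
      exact (div_le_div_iff_of_pos_right hpos).mpr h2
    have habs : Tendsto (fun x => |slope h t x|) (𝓝[D \ {t}] t) (𝓝 0) := by
      have hlim : Tendsto (fun x => (L : ℝ) * |slope u t x|) (𝓝[D \ {t}] t) (𝓝 0) := by
        simpa using (hTu.abs.const_mul (L : ℝ))
      exact squeeze_zero' (Eventually.of_forall fun x => abs_nonneg _) hbound hlim
    have hfin : Tendsto (slope h t) (𝓝[D \ {t}] t) (𝓝 0) :=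
      (tendsto_zero_iff_abs_tendsto_zero _).mpr habs
    exact tendsto_nhds_unique hTh hfin
  have hDnull : volume D = 0 := measure_mono_null (fun t ht => hDh t ht) hcrit
  have hAsplit : A ⊆ (A \ D) ∪ D := fun t ht => by
    by_cases hd : t ∈ D
    exacts [Or.inr hd, Or.inl ⟨ht, hd⟩]
  exact measure_mono_null hAsplit (measure_union_null hADnull hDnull)

theorem stmt_10 (c tbar : ℝ) (htbar : 0 < tbar) (g h u : ℝ → ℝ) (L : NNReal)
    (hg : LipschitzWith L g) (hh : ContDiff ℝ 1 h)
    (hcrit : MeasureTheory.volume {t | deriv h t = 0} = 0)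
    (hu : ContDiff ℝ 2 u)
    (heq : ∀ t ∈ Set.Icc 0 tbar,
      deriv (deriv u) t + c * deriv u t + g (u t) = h t) :
    ∀ B : Set ℝ, MeasureTheory.volume B = 0 →
      MeasureTheory.volume (u ⁻¹' B ∩ Set.Icc 0 tbar) = 0 := by
  intro B hB
  set B' := toMeasurable volume B with hB'
  have hB'm : MeasurableSet B' := measurableSet_toMeasurable _ _
  have hB'0 : volume B' = 0 := by rw [measure_toMeasurable]; exact hB
  have hBB' : B ⊆ B' := subset_toMeasurable _ _
  have hu1 : ContDiff ℝ 1 u := hu.of_le (by norm_num)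
  have hsub : u ⁻¹' B ∩ Set.Icc 0 tbar ⊆
      (u ⁻¹' B' ∩ {t | 0 < deriv u t}) ∪ (u ⁻¹' B' ∩ {t | deriv u t < 0}) ∪
      (Set.Icc 0 tbar ∩ {t | deriv u t = 0}) := by
    rintro t ⟨htB, htI⟩
    rcases lt_trichotomy (deriv u t) 0 with hlt | heq0 | hgt
    · exact Or.inl (Or.inr ⟨hBB' htB, hlt⟩)
    · exact Or.inr ⟨htI, heq0⟩
    · exact Or.inl (Or.inl ⟨hBB' htB, hgt⟩)
  apply measure_mono_null hsub
  refine measure_union_null (measure_union_null ?_ ?_) ?_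
  · exact aux_pos_10 u hu1 B' hB'm hB'0
  · have h1 : u ⁻¹' B' ∩ {t | deriv u t < 0} ⊆
        (fun t => -u t) ⁻¹' (Neg.neg ⁻¹' B') ∩ {t | 0 < deriv (fun t => -u t) t} := by
      rintro t ⟨ht1, ht2⟩
      refine ⟨by simpa using ht1, ?_⟩
      have hneg : deriv (fun t => -u t) t = -deriv u t := deriv.neg
      simp only [Set.mem_setOf_eq, hneg]
      simpa using ht2
    apply measure_mono_null h1
    apply aux_pos_10 _ hu1.neg
    · exact hB'm.neg
    · rw [Measure.measure_preimage_neg]; exact hB'0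
  · exact aux_crit_10 c tbar g h u L hg hh hcrit hu heq
end

section
/- Let P : ℝ² → ℝ² be C¹ with fixed point X₀ such that P is conjugated to its linear part M = DP(X₀) by a homeomorphism φ near the identity satisfying (1/2)|X - X₀| ≤ |φ(X) - φ(X₀)| ≤ 2|X - X₀|, and suppose M is diagonalizable over ℂ with both eigenvalues of modulus e^{-cT/2} (c, T > 0). Then for every X near X₀ with X ≠ X₀, lim_{n→∞} (1/(nT)) ln|Pⁿ(X) - X₀| = -c/2. -/
lemma aux13_opbound (B : Matrix (Fin 2) (Fin 2) ℂ) :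
    ∃ K : ℝ, 1 ≤ K ∧ ∀ w : Fin 2 → ℂ, ‖B.mulVec w‖ ≤ K * ‖w‖ := by
  let g := LinearMap.toContinuousLinearMap (Matrix.mulVecLin B)
  refine ⟨max ‖g‖ 1, le_max_right _ _, fun w => ?_⟩
  have h1 : B.mulVec w = g w := by simp [g]
  rw [h1]
  exact (g.le_opNorm w).trans
    (mul_le_mul_of_nonneg_right (le_max_left _ _) (norm_nonneg w))

lemma aux13_diag_le (d : Fin 2 → ℂ) (s : ℝ) (hs : 0 ≤ s) (hd : ∀ i, ‖d i‖ ≤ s)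
    (u : Fin 2 → ℂ) : ‖(Matrix.diagonal d).mulVec u‖ ≤ s * ‖u‖ := by
  rw [pi_norm_le_iff_of_nonneg (mul_nonneg hs (norm_nonneg u))]
  intro i
  rw [Matrix.mulVec_diagonal, norm_mul]
  exact mul_le_mul (hd i) (norm_le_pi_norm u i) (norm_nonneg _) hs

lemma aux13_diag_norm (d : Fin 2 → ℂ) (s : ℝ) (hs : 0 < s) (hd : ∀ i, ‖d i‖ = s)
    (u : Fin 2 → ℂ) : s * ‖u‖ ≤ ‖(Matrix.diagonal d).mulVec u‖ := by
  have hdne : ∀ i, d i ≠ 0 := fun i h => by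
    have := hd i; rw [h, norm_zero] at this; exact hs.ne this
  have hu : u = (Matrix.diagonal fun i => (d i)⁻¹).mulVec ((Matrix.diagonal d).mulVec u) := by
    rw [Matrix.mulVec_mulVec, Matrix.diagonal_mul_diagonal]
    have : (fun i => (d i)⁻¹ * d i) = fun _ => (1 : ℂ) := by
      funext i; exact inv_mul_cancel₀ (hdne i)
    rw [this]
    simp [Matrix.diagonal_one]
  have hle : ‖u‖ ≤ s⁻¹ * ‖(Matrix.diagonal d).mulVec u‖ := by
    conv_lhs => rw [hu]
    refine aux13_diag_le _ _ (by positivity) (fun i => ?_) _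
    rw [norm_inv, hd i]
  calc s * ‖u‖ ≤ s * (s⁻¹ * ‖(Matrix.diagonal d).mulVec u‖) :=
        mul_le_mul_of_nonneg_left hle hs.le
    _ = ‖(Matrix.diagonal d).mulVec u‖ := by field_simp

lemma aux13_pow_bound (ρ : ℂ) (hρ : ρ ≠ 0) (C : Matrix (Fin 2) (Fin 2) ℂ) (hC : IsUnit C.det)
    (A : Matrix (Fin 2) (Fin 2) ℂ)
    (hA : A = C * Matrix.diagonal ![ρ, starRingEnd ℂ ρ] * C⁻¹) :
    ∃ K : ℝ, 1 ≤ K ∧ ∀ (n : ℕ) (w : Fin 2 → ℂ),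
      ‖(A ^ n).mulVec w‖ ≤ K * ‖ρ‖ ^ n * ‖w‖ ∧
      ‖ρ‖ ^ n * ‖w‖ ≤ K * ‖(A ^ n).mulVec w‖ := by
  obtain ⟨K₁, hK₁, hb₁⟩ := aux13_opbound C
  obtain ⟨K₂, hK₂, hb₂⟩ := aux13_opbound C⁻¹
  have hCC : C * C⁻¹ = 1 := Matrix.mul_nonsing_inv C hC
  have hCC' : C⁻¹ * C = 1 := Matrix.nonsing_inv_mul C hC
  have haρ : (0:ℝ) < ‖ρ‖ := by
    simpa [norm_pos_iff] using hρ
  -- powers of A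
  have hApow : ∀ n : ℕ, A ^ n =
      C * Matrix.diagonal ![ρ ^ n, (starRingEnd ℂ ρ) ^ n] * C⁻¹ := by
    intro n
    induction n with
    | zero =>
      have h1 : (![ρ ^ 0, (starRingEnd ℂ ρ) ^ 0] : Fin 2 → ℂ) = fun _ => 1 := by
        funext i; fin_cases i <;> simp
      rw [pow_zero, h1, Matrix.diagonal_one, mul_one, hCC]
    | succ n ih =>
      have h2 : (fun i => (![ρ ^ n, (starRingEnd ℂ ρ) ^ n] : Fin 2 → ℂ) i *
          (![ρ, starRingEnd ℂ ρ] : Fin 2 → ℂ) i)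
          = ![ρ ^ (n+1), (starRingEnd ℂ ρ) ^ (n+1)] := by
        funext i; fin_cases i <;> simp [pow_succ]
      rw [pow_succ, ih, hA]
      rw [show C * Matrix.diagonal ![ρ ^ n, (starRingEnd ℂ ρ) ^ n] * C⁻¹ *
          (C * Matrix.diagonal ![ρ, starRingEnd ℂ ρ] * C⁻¹)
          = C * (Matrix.diagonal ![ρ ^ n, (starRingEnd ℂ ρ) ^ n] *
            ((C⁻¹ * C) * Matrix.diagonal ![ρ, starRingEnd ℂ ρ])) * C⁻¹ by
        simp only [mul_assoc]]
      rw [hCC', one_mul, Matrix.diagonal_mul_diagonal, h2]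
  have hdnorm : ∀ n : ℕ, ∀ i, ‖(![ρ ^ n, (starRingEnd ℂ ρ) ^ n] : Fin 2 → ℂ) i‖
      = ‖ρ‖ ^ n := by
    intro n i; fin_cases i <;>
      simp [map_pow, Complex.norm_conj]
  refine ⟨K₁ * K₂, by nlinarith, fun n w => ?_⟩
  set D := Matrix.diagonal ![ρ ^ n, (starRingEnd ℂ ρ) ^ n] with hD
  set u := C⁻¹.mulVec w with hu
  have hAnw : (A ^ n).mulVec w = C.mulVec (D.mulVec u) := by
    rw [hApow n, Matrix.mulVec_mulVec, Matrix.mulVec_mulVec]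
  have hpowpos : (0:ℝ) < ‖ρ‖ ^ n := pow_pos haρ n
  have hDu_le : ‖D.mulVec u‖ ≤ ‖ρ‖ ^ n * ‖u‖ :=
    aux13_diag_le _ _ hpowpos.le (fun i => (hdnorm n i).le) u
  have hDu_ge : ‖ρ‖ ^ n * ‖u‖ ≤ ‖D.mulVec u‖ :=
    aux13_diag_norm _ _ hpowpos (hdnorm n) u
  constructor
  · rw [hAnw]
    calc ‖C.mulVec (D.mulVec u)‖ ≤ K₁ * ‖D.mulVec u‖ := hb₁ _
      _ ≤ K₁ * (‖ρ‖ ^ n * ‖u‖) := by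
          exact mul_le_mul_of_nonneg_left hDu_le (by linarith)
      _ ≤ K₁ * (‖ρ‖ ^ n * (K₂ * ‖w‖)) :=
          mul_le_mul_of_nonneg_left
            (mul_le_mul_of_nonneg_left (hb₂ w) hpowpos.le) (by linarith)
      _ = K₁ * K₂ * ‖ρ‖ ^ n * ‖w‖ := by ring
  · have hwu : w = C.mulVec u := by
      rw [hu, Matrix.mulVec_mulVec, hCC, Matrix.one_mulVec]
    have h1 : ‖w‖ ≤ K₁ * ‖u‖ := by rw [hwu]; exact hb₁ u
    have h2 : ‖D.mulVec u‖ ≤ K₂ * ‖(A ^ n).mulVec w‖ := by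
      have h3 : C⁻¹.mulVec ((A ^ n).mulVec w) = D.mulVec u := by
        rw [hAnw, Matrix.mulVec_mulVec, hCC', Matrix.one_mulVec]
      rw [← h3]; exact hb₂ _
    calc ‖ρ‖ ^ n * ‖w‖ ≤ ‖ρ‖ ^ n * (K₁ * ‖u‖) := by
          exact mul_le_mul_of_nonneg_left h1 hpowpos.le
      _ = K₁ * (‖ρ‖ ^ n * ‖u‖) := by ring
      _ ≤ K₁ * ‖D.mulVec u‖ := mul_le_mul_of_nonneg_left hDu_ge (by linarith)
      _ ≤ K₁ * (K₂ * ‖(A ^ n).mulVec w‖) := mul_le_mul_of_nonneg_left h2 (by linarith)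
      _ = K₁ * K₂ * ‖(A ^ n).mulVec w‖ := by ring
theorem stmt_13 (c T : ℝ) (hc : 0 < c) (hT : 0 < T)
    (P : (Fin 2 → ℝ) → (Fin 2 → ℝ)) (hP : ContDiff ℝ 1 P)
    (X₀ : Fin 2 → ℝ) (hfix : P X₀ = X₀)
    (M : Matrix (Fin 2) (Fin 2) ℝ)
    (hM : ∀ v, (fderiv ℝ P X₀) v = M.mulVec v)
    (ρ : ℂ) (C : Matrix (Fin 2) (Fin 2) ℂ) (hC : IsUnit C.det)
    (hdiag : M.map (Complex.ofReal) = C * Matrix.diagonal ![ρ, starRingEnd ℂ ρ] * C⁻¹)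
    (habs : ‖ρ‖ = Real.exp (-c * T / 2))
    (U : Set (Fin 2 → ℝ)) (hU : U ∈ nhds X₀) (hinv : Set.MapsTo P U U)
    (φ : (Fin 2 → ℝ) ≃ₜ (Fin 2 → ℝ))
    (hconj : ∀ X ∈ U, φ (P X) - φ X₀ = M.mulVec (φ X - φ X₀))
    (hbound : ∀ X ∈ U,
      (1 / 2) * ‖X - X₀‖ ≤ ‖φ X - φ X₀‖ ∧ ‖φ X - φ X₀‖ ≤ 2 * ‖X - X₀‖) :
    ∀ X ∈ U, X ≠ X₀ →
      Filter.Tendsto (fun n : ℕ => (1 / ((n : ℝ) * T)) * Real.log ‖P^[n] X - X₀‖)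
        Filter.atTop (nhds (-c / 2)) := by
  intro X hX hXne
  have haρ : (0:ℝ) < ‖ρ‖ := by rw [habs]; exact Real.exp_pos _
  have hρ0 : ρ ≠ 0 := by simpa [norm_pos_iff] using haρ
  obtain ⟨K, hK1, hKprop⟩ := aux13_pow_bound ρ hρ0 C hC (M.map Complex.ofReal) hdiag
  have hK0 : (0:ℝ) < K := lt_of_lt_of_le one_pos hK1
  -- embedding ℝ² → ℂ²
  have he_norm : ∀ u : Fin 2 → ℝ, ‖(fun i => (u i : ℂ) : Fin 2 → ℂ)‖ = ‖u‖ := by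
    intro u
    simp [Pi.norm_def]
  have hpowmap : ∀ n : ℕ, (M ^ n).map Complex.ofReal = (M.map Complex.ofReal) ^ n := by
    intro n
    have hrw : ∀ B : Matrix (Fin 2) (Fin 2) ℝ, B.map Complex.ofReal =
        (Complex.ofRealHom.mapMatrix : Matrix (Fin 2) (Fin 2) ℝ →+* Matrix (Fin 2) (Fin 2) ℂ) B :=
      fun _ => rfl
    rw [hrw, hrw, map_pow]
  have hmulc : ∀ n (u : Fin 2 → ℝ),
      ((M ^ n).map Complex.ofReal).mulVec (fun i => (u i : ℂ))
        = fun i => (((M ^ n).mulVec u) i : ℂ) := by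
    intro n u
    funext i
    simp only [Matrix.mulVec, dotProduct, Matrix.map_apply]
    push_cast
    rfl
  have hreal : ∀ (n : ℕ) (u : Fin 2 → ℝ),
      ‖(M ^ n).mulVec u‖ ≤ K * ‖ρ‖ ^ n * ‖u‖ ∧
      ‖ρ‖ ^ n * ‖u‖ ≤ K * ‖(M ^ n).mulVec u‖ := by
    intro n u
    have h := hKprop n (fun i => (u i : ℂ))
    rw [← hpowmap n, hmulc n u, he_norm, he_norm] at h
    exact h
  -- orbit facts
  have hiterU : ∀ n : ℕ, P^[n] X ∈ U := by
    intro n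
    induction n with
    | zero => simpa using hX
    | succ n ih => rw [Function.iterate_succ_apply']; exact hinv ih
  have horb : ∀ n : ℕ, φ (P^[n] X) - φ X₀ = (M ^ n).mulVec (φ X - φ X₀) := by
    intro n
    induction n with
    | zero => simp [Matrix.one_mulVec]
    | succ n ih =>
      rw [Function.iterate_succ_apply', hconj _ (hiterU n), ih,
        Matrix.mulVec_mulVec, ← pow_succ']
  have hvpos : (0:ℝ) < ‖φ X - φ X₀‖ := by
    have h1 := (hbound X hX).1
    have h2 : (0:ℝ) < ‖X - X₀‖ := by
      rw [norm_pos_iff]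
      exact sub_ne_zero.mpr hXne
    linarith
  set v : Fin 2 → ℝ := φ X - φ X₀ with hv
  -- norm bounds on the orbit
  have hb_up : ∀ n : ℕ, ‖P^[n] X - X₀‖ ≤ 2 * K * ‖ρ‖ ^ n * ‖v‖ := by
    intro n
    have h1 := (hbound _ (hiterU n)).1
    rw [horb n] at h1
    have h2 := (hreal n v).1
    linarith
  have hb_lo : ∀ n : ℕ, ‖ρ‖ ^ n * ‖v‖ ≤ 2 * K * ‖P^[n] X - X₀‖ := by
    intro n
    have h1 := (hbound _ (hiterU n)).2
    rw [horb n] at h1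
    have h2 := (hreal n v).2
    nlinarith
  have hbpos : ∀ n : ℕ, (0:ℝ) < ‖P^[n] X - X₀‖ := by
    intro n
    have h1 := hb_lo n
    have h2 : (0:ℝ) < ‖ρ‖ ^ n * ‖v‖ := mul_pos (pow_pos haρ n) hvpos
    nlinarith
  -- logs
  have hloga : Real.log (‖ρ‖) = -c * T / 2 := by
    rw [habs, Real.log_exp]
  set c₂ : ℝ := Real.log (2 * K * ‖v‖) with hc₂
  set c₁ : ℝ := Real.log (‖v‖ / (2 * K)) with hc₁
  have hlogup : ∀ n : ℕ, Real.log ‖P^[n] X - X₀‖ ≤ (n:ℝ) * Real.log (‖ρ‖) + c₂ := by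
    intro n
    have h1 : Real.log ‖P^[n] X - X₀‖ ≤ Real.log (2 * K * ‖ρ‖ ^ n * ‖v‖) :=
      Real.log_le_log (hbpos n) (hb_up n)
    have h2 : 2 * K * ‖ρ‖ ^ n * ‖v‖ = (2 * K * ‖v‖) * ‖ρ‖ ^ n := by ring
    rw [h2, Real.log_mul (by positivity) (by positivity), Real.log_pow] at h1
    linarith
  have hloglo : ∀ n : ℕ, (n:ℝ) * Real.log (‖ρ‖) + c₁ ≤ Real.log ‖P^[n] X - X₀‖ := by
    intro n
    have h0 : (0:ℝ) < (‖v‖ / (2 * K)) * ‖ρ‖ ^ n := by positivity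
    have h1 : (‖v‖ / (2 * K)) * ‖ρ‖ ^ n ≤ ‖P^[n] X - X₀‖ := by
      have := hb_lo n
      rw [div_mul_eq_mul_div, div_le_iff₀ (by positivity)]
      nlinarith
    have h2 := Real.log_le_log h0 h1
    rw [Real.log_mul (by positivity) (by positivity), Real.log_pow] at h2
    linarith
  -- the squeeze
  have h0T : Filter.Tendsto (fun n : ℕ => 1 / ((n:ℝ) * T)) Filter.atTop (nhds 0) := by
    have h1 := tendsto_one_div_atTop_nhds_zero_nat (𝕜 := ℝ)
    have h2 := h1.div_const T
    have h3 : (fun n : ℕ => 1 / ((n:ℝ) * T)) = fun n : ℕ => 1 / (n:ℝ) / T := by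
      funext n; rw [div_div]
    rw [h3]
    simpa using h2
  have hglim : ∀ c' : ℝ, Filter.Tendsto (fun n : ℕ => -c/2 + (1 / ((n:ℝ) * T)) * c')
      Filter.atTop (nhds (-c/2)) := by
    intro c'
    have := (h0T.mul_const c').const_add (-c/2)
    simpa using this
  have key : ∀ c' : ℝ, ∀ n : ℕ, 1 ≤ n →
      (1 / ((n:ℝ) * T)) * ((n:ℝ) * Real.log (‖ρ‖) + c')
        = -c/2 + (1 / ((n:ℝ) * T)) * c' := by
    intro c' n hn
    have hn0 : (0:ℝ) < (n:ℝ) := by exact_mod_cast hn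
    rw [hloga]
    field_simp
  refine tendsto_of_tendsto_of_tendsto_of_le_of_le' (hglim c₁) (hglim c₂) ?_ ?_
  · filter_upwards [Filter.eventually_ge_atTop 1] with n hn
    have hn0 : (0:ℝ) < (n:ℝ) := by exact_mod_cast hn
    have hpos : (0:ℝ) < 1 / ((n:ℝ) * T) := by positivity
    rw [← key c₁ n hn]
    exact mul_le_mul_of_nonneg_left (hloglo n) hpos.le
  · filter_upwards [Filter.eventually_ge_atTop 1] with n hn
    have hn0 : (0:ℝ) < (n:ℝ) := by exact_mod_cast hn
    have hpos : (0:ℝ) < 1 / ((n:ℝ) * T) := by positivity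
    rw [← key c₂ n hn]
    exact mul_le_mul_of_nonneg_left (hlogup n) hpos.le
end

section
/- Let f, g : ℝ → ℝ be continuous with |f(x)| ≥ k > 0 for all x and g strictly increasing, h continuous and T-periodic. If the Liénard equation x'' + f(x)x' + g(x) = h(t) has a T-periodic solution, then the mean value h̄ = (1/T)∫₀^T h(t) dt lies in the range of g. -/
theorem stmt_15 (T k : ℝ) (hT : 0 < T) (hk : 0 < k)
    (f g h : ℝ → ℝ) (hf : Continuous f) (hg : Continuous g) (hh : Continuous h)
    (hfk : ∀ x, k ≤ |f x|) (hmono : StrictMono g)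
    (hper : ∀ t, h (t + T) = h t)
    (x : ℝ → ℝ) (hx : ContDiff ℝ 2 x) (hxper : ∀ t, x (t + T) = x t)
    (heq : ∀ t, deriv (deriv x) t + f (x t) * deriv x t + g (x t) = h t) :
    (1 / T) * (∫ t in (0:ℝ)..T, h t) ∈ Set.range g := by
  have hx2 : ContDiff ℝ (1 + 1) x := by norm_num; exact hx
  have hxd : Differentiable ℝ x := hx.differentiable (by norm_num)
  have hx1 : ContDiff ℝ 1 (deriv x) := (contDiff_succ_iff_deriv.mp hx2).2.2
  have hxd1 : Differentiable ℝ (deriv x) := hx1.differentiable one_ne_zero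
  have hcd2 : Continuous (deriv (deriv x)) := hx1.continuous_deriv le_rfl
  have hcd1 : Continuous (deriv x) := hxd1.continuous
  -- deriv x is periodic
  have hdper : deriv x T = deriv x 0 := by
    have : deriv (fun s => x (s + T)) 0 = deriv x (0 + T) := deriv_comp_add_const x T 0
    have h2 : (fun s => x (s + T)) = x := funext hxper
    rw [h2] at this
    simpa using this.symm
  -- integral of x''
  have hI1 : (∫ t in (0:ℝ)..T, deriv (deriv x) t) = 0 := by
    rw [intervalIntegral.integral_deriv_eq_sub (fun t _ => hxd1 t)
      (hcd2.intervalIntegrable 0 T)]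
    rw [hdper, sub_self]
  -- integral of f(x) x'
  set F : ℝ → ℝ := fun y => ∫ s in (0:ℝ)..y, f s with hF
  have hFd : ∀ y, HasDerivAt F (f y) y := fun y =>
    intervalIntegral.integral_hasDerivAt_right (hf.intervalIntegrable 0 y)
      (hf.stronglyMeasurableAtFilter _ _) hf.continuousAt
  have hGd : ∀ t, HasDerivAt (F ∘ x) (f (x t) * deriv x t) t := fun t =>
    (hFd (x t)).comp t (hxd t).hasDerivAt
  have hI2 : (∫ t in (0:ℝ)..T, f (x t) * deriv x t) = 0 := by
    rw [intervalIntegral.integral_eq_sub_of_hasDerivAt (fun t _ => hGd t)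
      (((hf.comp hxd.continuous).mul hcd1).intervalIntegrable 0 T)]
    have : x T = x 0 := by simpa using hxper 0
    simp [Function.comp, this]
  -- integral identity
  have key : (∫ t in (0:ℝ)..T, g (x t)) = ∫ t in (0:ℝ)..T, h t := by
    have : (∫ t in (0:ℝ)..T, h t) =
        ∫ t in (0:ℝ)..T, (deriv (deriv x) t + f (x t) * deriv x t + g (x t)) := by
      exact intervalIntegral.integral_congr (fun t _ => (heq t).symm)
    rw [this, intervalIntegral.integral_add, intervalIntegral.integral_add, hI1, hI2]
    · ring
    · exact hcd2.intervalIntegrable 0 T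
    · exact ((hf.comp hxd.continuous).mul hcd1).intervalIntegrable 0 T
    · exact (hcd2.intervalIntegrable 0 T).add
        (((hf.comp hxd.continuous).mul hcd1).intervalIntegrable 0 T)
    · exact (hg.comp hxd.continuous).intervalIntegrable 0 T
  -- mean value theorem for the integral
  set Φ : ℝ → ℝ := fun t => ∫ s in (0:ℝ)..t, g (x s) with hΦ
  have hΦd : ∀ t, HasDerivAt Φ (g (x t)) t := fun t =>
    intervalIntegral.integral_hasDerivAt_right
      ((hg.comp hxd.continuous).intervalIntegrable 0 t)
      ((hg.comp hxd.continuous).stronglyMeasurableAtFilter _ _)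
      (hg.comp hxd.continuous).continuousAt
  obtain ⟨c, _, hc⟩ := exists_hasDerivAt_eq_slope Φ (fun t => g (x t)) hT
    (fun t _ => (hΦd t).differentiableAt.continuousAt.continuousWithinAt)
    (fun t _ => hΦd t)
  refine ⟨x c, ?_⟩
  rw [hc]
  have hΦ0 : Φ 0 = 0 := by simp [hΦ]
  have hΦT : Φ T = ∫ t in (0:ℝ)..T, h t := by rw [hΦ]; exact key
  rw [hΦ0, hΦT, sub_zero, sub_zero, div_eq_mul_inv, mul_comm, one_div]
end
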